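/- Let ψ be a solution of the non-homogeneous equation y'' + b(x)y' + c(x)y = F(x) on [a, ∞), and ψ_p a particular solution, with ψ - ψ_p not identically zero. If Q(x) = -(1/4)(b² - 4c + 2b') ≥ ε² on [a, ∞) for some ε > 0, then ψ - ψ_p has infinitely many zeros in [a, ∞), i.e., ψ oscillates about ψ_p. -/

import Mathlib

/-!
Let `u = ψ - ψp`, a solution of the homogeneous equation `u'' + b u' + c u = 0`. Were its zeros
bounded, then beyond the last one the Riccati variable `w = u'/u + b/2` would satisfy
`w' = -w² - Q ≤ -(w² + ε²)`, so `arctan (w / ε)` would decrease with slope at most `-ε` for ever,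
which is impossible for a function with values in `(-π/2, π/2)`.
-/

open Set Real

theorem false_of_hasDerivAt_le_neg_sq_add_sq {w w' : ℝ → ℝ} {X ε : ℝ} (hε : 0 < ε)
    (hw : ∀ x, X ≤ x → HasDerivAt w (w' x) x)
    (hle : ∀ x, X ≤ x → w' x ≤ -(w x ^ 2 + ε ^ 2)) : False := by
  set g : ℝ → ℝ := fun x => arctan (w x / ε) + x * ε
  have hg : ∀ x, X ≤ x → HasDerivAt g (1 / (1 + (w x / ε) ^ 2) * (w' x / ε) + ε) x :=
    fun x hx => ((hw x hx).div_const ε).arctan.add (hasDerivAt_mul_const ε)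
  have hg_nonpos : ∀ x, X ≤ x → 1 / (1 + (w x / ε) ^ 2) * (w' x / ε) + ε ≤ 0 := by
    intro x hx
    have hpos : 0 < ε ^ 2 + w x ^ 2 := by positivity
    have hrw : 1 / (1 + (w x / ε) ^ 2) * (w' x / ε) = ε * w' x / (ε ^ 2 + w x ^ 2) := by
      field_simp
    rw [hrw, div_add' _ _ _ hpos.ne', div_nonpos_iff]
    right
    exact ⟨by nlinarith [hle x hx], hpos.le⟩
  have hanti : AntitoneOn g (Ici X) :=
    antitoneOn_of_hasDerivWithinAt_nonpos (convex_Ici X)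
      (fun x hx => (hg x hx).continuousAt.continuousWithinAt)
      (fun x hx => (hg x (interior_subset hx)).hasDerivWithinAt)
      (fun x hx => hg_nonpos x (interior_subset hx))
  have hstep : X ≤ X + π / ε := le_add_of_nonneg_right (by positivity)
  have hdrop := hanti (mem_Ici.2 le_rfl) (mem_Ici.2 hstep) hstep
  have hcancel : (X + π / ε) * ε = X * ε + π := by field_simp
  simp only [g, hcancel] at hdrop
  linarith [arctan_lt_pi_div_two (w X / ε), neg_pi_div_two_lt_arctan (w (X + π / ε) / ε)]

noncomputable def riccatiVar (b u : ℝ → ℝ) (x : ℝ) : ℝ := deriv u x / u x + b x / 2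

theorem hasDerivAt_riccatiVar {b u : ℝ → ℝ} {c x : ℝ} (hb : DifferentiableAt ℝ b x)
    (hu : DifferentiableAt ℝ u x) (hu' : DifferentiableAt ℝ (deriv u) x) (hux : u x ≠ 0)
    (hode : deriv (deriv u) x + b x * deriv u x + c * u x = 0) :
    HasDerivAt (riccatiVar b u)
      (-riccatiVar b u x ^ 2 - (c - b x ^ 2 / 4 - deriv b x / 2)) x := by
  have h : HasDerivAt (riccatiVar b u)
      ((deriv (deriv u) x * u x - deriv u x * deriv u x) / u x ^ 2 + deriv b x / 2) x :=
    (hu'.hasDerivAt.div hu.hasDerivAt hux).add (hb.hasDerivAt.div_const 2)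
  refine h.congr_deriv ?_
  rw [riccatiVar, show deriv (deriv u) x = -(b x * deriv u x) - c * u x by
    linear_combination hode]
  field_simp
  ring

theorem not_bddAbove_zeros_of_ode {b c u : ℝ → ℝ} {a ε : ℝ} (hε : 0 < ε)
    (hb : Differentiable ℝ b) (hu : Differentiable ℝ u) (hu' : Differentiable ℝ (deriv u))
    (hQ : ∀ x, a ≤ x → ε ^ 2 ≤ -(1/4) * (b x ^ 2 - 4 * c x + 2 * deriv b x))
    (hode : ∀ x, a ≤ x → deriv (deriv u) x + b x * deriv u x + c x * u x = 0) :
    ¬BddAbove {x | a ≤ x ∧ u x = 0} := by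
  rintro ⟨X, hX⟩
  have hne : ∀ x, max a (X + 1) ≤ x → u x ≠ 0 := fun x hx hux => by
    have := hX ⟨le_of_max_le_left hx, hux⟩
    linarith [le_of_max_le_right hx]
  refine false_of_hasDerivAt_le_neg_sq_add_sq hε (X := max a (X + 1)) (w := riccatiVar b u)
    (fun x hx => hasDerivAt_riccatiVar (hb x) (hu x) (hu' x) (hne x hx)
      (hode x (le_of_max_le_left hx))) fun x hx => ?_
  linarith [hQ x (le_of_max_le_left hx)]

theorem oscillation_about_particular_general (b c F ψ ψp : ℝ → ℝ) (a ε : ℝ) (hε : 0 < ε)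
    (hb : ContDiff ℝ 1 b)
    (hQ : ∀ x, a ≤ x → ε ^ 2 ≤ -(1/4) * (b x ^ 2 - 4 * c x + 2 * deriv b x))
    (hψd : Differentiable ℝ ψ) (hψd' : Differentiable ℝ (deriv ψ))
    (hψpd : Differentiable ℝ ψp) (hψpd' : Differentiable ℝ (deriv ψp))
    (hode : ∀ x, a ≤ x → deriv (deriv ψ) x + b x * deriv ψ x + c x * ψ x = F x)
    (hodep : ∀ x, a ≤ x → deriv (deriv ψp) x + b x * deriv ψp x + c x * ψp x = F x) :
    {x | a ≤ x ∧ ψ x - ψp x = 0}.Infinite := by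
  have hderiv : deriv (fun x => ψ x - ψp x) = fun x => deriv ψ x - deriv ψp x :=
    funext fun x => deriv_fun_sub (hψd x) (hψpd x)
  refine infinite_of_not_bddAbove <| not_bddAbove_zeros_of_ode hε
    (hb.differentiable one_ne_zero) (hψd.sub hψpd) (hderiv ▸ hψd'.sub hψpd') hQ fun x hx => ?_
  rw [hderiv, deriv_fun_sub (hψd' x) (hψpd' x)]
  linear_combination hode x hx - hodep x hx

/-- Non-homogeneous extension: if Q = -(1/4)(b² - 4c + 2b') ≥ ε² on [a,∞) and
ψ, ψp both solve y'' + b y' + c y = F with ψ - ψp not identically zero, then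
ψ - ψp has infinitely many zeros in [a,∞). -/
theorem oscillation_about_particular (b c F ψ ψp : ℝ → ℝ) (a ε : ℝ) (hε : 0 < ε)
    (hb : ContDiff ℝ 1 b) (hc : ContinuousOn c (Set.Ici a))
    (hF : ContinuousOn F (Set.Ici a))
    (hQ : ∀ x, a ≤ x → ε ^ 2 ≤ -(1/4) * (b x ^ 2 - 4 * c x + 2 * deriv b x))
    (hψd : Differentiable ℝ ψ) (hψd' : Differentiable ℝ (deriv ψ))
    (hψpd : Differentiable ℝ ψp) (hψpd' : Differentiable ℝ (deriv ψp))
    (hode : ∀ x, a ≤ x → deriv (deriv ψ) x + b x * deriv ψ x + c x * ψ x = F x)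
    (hodep : ∀ x, a ≤ x → deriv (deriv ψp) x + b x * deriv ψp x + c x * ψp x = F x)
    (hnt : ∃ x, a ≤ x ∧ ψ x - ψp x ≠ 0) :
    {x | a ≤ x ∧ ψ x - ψp x = 0}.Infinite :=
  oscillation_about_particular_general b c F ψ ψp a ε hε hb hQ hψd hψd' hψpd hψpd' hode hodep
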